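/- Let b ≥ 2 and N ≥ 1 be integers. Let S_1 be the b×b lower-triangular matrix all of whose entries on or below the diagonal equal 1, with S_{N+1} := S_1 ⊗ S_N; let M_1 be the b×b matrix with 1's on the diagonal, -1's on the subdiagonal, and 0 elsewhere, with M_{N+1} := M_1 ⊗ M_N; and set T_N := M_Nᵀ, U_N := S_N T_N, V_N := T_N S_N. Then U_N^{b+1} = V_N^{b+1} = (-1)^{N(b+1)} · I_{b^N}. -/

import Mathlib

open Matrix

/-- The matrix `S_1`: the `b×b` lower-triangular matrix all of whose entries on or below the
diagonal equal `1`. -/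
def S1 (b : ℕ) : Matrix (Fin b) (Fin b) ℤ :=
  Matrix.of fun j k => if (k : ℕ) ≤ (j : ℕ) then 1 else 0

/-- The matrix `M_1`: the `b×b` matrix with `1`'s on the diagonal, `-1`'s on the subdiagonal,
and `0` elsewhere. -/
def M1 (b : ℕ) : Matrix (Fin b) (Fin b) ℤ :=
  Matrix.of fun j k =>
    if (j : ℕ) = (k : ℕ) then 1 else if (j : ℕ) = (k : ℕ) + 1 then -1 else 0

/-- The equivalence `Fin b × Fin (b^N) ≃ Fin (b^(N+1))`, `(p, r) ↦ p·b^N + r`, used to index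
Kronecker products. -/
def pke (b N : ℕ) : Fin b × Fin (b ^ N) ≃ Fin (b ^ (N + 1)) :=
  finProdFinEquiv.trans (finCongr (by ring))

open Kronecker in
/-- The matrices `S_N`, defined recursively by `S_{N+1} = S_1 ⊗ S_N` (Kronecker product). -/
def Smat (b : ℕ) : (N : ℕ) → Matrix (Fin (b ^ N)) (Fin (b ^ N)) ℤ
  | 0 => 1
  | N + 1 => Matrix.reindex (pke b N) (pke b N) (S1 b ⊗ₖ Smat b N)

open Kronecker in
/-- The matrices `M_N`, defined recursively by `M_{N+1} = M_1 ⊗ M_N` (Kronecker product). -/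
def Mmat (b : ℕ) : (N : ℕ) → Matrix (Fin (b ^ N)) (Fin (b ^ N)) ℤ
  | 0 => 1
  | N + 1 => Matrix.reindex (pke b N) (pke b N) (M1 b ⊗ₖ Mmat b N)

/-!
`S₁` inverts `M₁` (partial sums undo differences). Identify `ℤ^b` with `ℤ^(b+1)` modulo constants
via `y ↦ (yᵢ - y_b)ᵢ`. In these coordinates both `M₁ᵀ` and `-M₁` after the cyclic shift
`yᵢ ↦ yᵢ₊₁` take consecutive differences of `y`, so `-S₁M₁ᵀ` is that shift and
`(S₁M₁ᵀ)^(b+1) = (-1)^(b+1)`. Kronecker products multiply powers, which gives `U_N`, and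
`V_N = S_N⁻¹ U_N S_N`.
-/

open Kronecker

theorem Fin.sum_ite_val_eq {M : Type*} [AddCommMonoid M] {n : ℕ} (f : Fin n → M) (m : ℕ) :
    ∑ k : Fin n, (if (k : ℕ) = m then f k else 0) = if h : m < n then f ⟨m, h⟩ else 0 := by
  split_ifs with h
  · simp [← Fin.ext_iff (b := ⟨m, h⟩)]
  · exact Finset.sum_eq_zero fun k _ => if_neg (by omega)

theorem vecMul_M1_apply {b : ℕ} (v : Fin b → ℤ) (k : Fin b) :
    (v ᵥ* M1 b) k = v k - if h : (k : ℕ) + 1 < b then v ⟨k + 1, h⟩ else 0 := by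
  have hterm : ∀ j : Fin b, v j * M1 b j k =
      (if (j : ℕ) = k then v j else 0) - if (j : ℕ) = k + 1 then v j else 0 := by
    intro j; simp only [M1, of_apply]; split_ifs <;> omega
  simp only [vecMul, dotProduct, hterm, Finset.sum_sub_distrib, Fin.sum_ite_val_eq, k.isLt,
    dite_true]

theorem M1_mulVec_apply {b : ℕ} (w : Fin b → ℤ) (j : Fin b) :
    (M1 b *ᵥ w) j = w j - if h : 0 < (j : ℕ) then w ⟨j - 1, by omega⟩ else 0 := by
  have hterm : ∀ k : Fin b, M1 b j k * w k =
      (if (k : ℕ) = j then w k else 0) -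
        if 0 < (j : ℕ) then (if (k : ℕ) = j - 1 then w k else 0) else 0 := by
    intro k; simp only [M1, of_apply]; split_ifs <;> omega
  simp only [mulVec, dotProduct, hterm, Finset.sum_sub_distrib, Fin.sum_ite_val_eq, j.isLt,
    dite_true]
  by_cases hj : 0 < (j : ℕ) <;> simp [hj, Fin.sum_ite_val_eq, show (j : ℕ) - 1 < b by omega]

theorem S1_mul_M1 (b : ℕ) : S1 b * M1 b = 1 := by
  ext i j
  rw [mul_apply_eq_vecMul, vecMul_M1_apply]
  simp only [S1, of_apply, one_apply, Fin.ext_iff]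
  split_ifs <;> omega

def subLast {b : ℕ} (y : Fin (b + 1) → ℤ) : Fin b → ℤ :=
  fun i => y i.castSucc - y (Fin.last b)

theorem M1_transpose_mulVec_subLast {b : ℕ} (y : Fin (b + 1) → ℤ) :
    (M1 b)ᵀ *ᵥ subLast y = fun k => y k.castSucc - y k.succ := by
  ext k
  rw [mulVec_transpose, vecMul_M1_apply]
  split_ifs with h
  · simp only [subLast, show (⟨k + 1, h⟩ : Fin b).castSucc = k.succ from rfl]
    ring
  · simp [subLast, show k.succ = Fin.last b from Fin.ext (by simp; omega)]

theorem M1_mulVec_subLast_rotate {b : ℕ} (y : Fin (b + 1) → ℤ) :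
    M1 b *ᵥ subLast (fun i => y (i + 1)) = fun k => y k.succ - y k.castSucc := by
  ext k
  rw [M1_mulVec_apply]
  simp only [subLast, Fin.coeSucc_eq_succ, Fin.last_add_one]
  split_ifs with h
  · simp only [show (⟨k - 1, by omega⟩ : Fin b).succ = k.castSucc from Fin.ext (by simp; omega)]
    ring
  · simp [show k.castSucc = 0 from Fin.ext (by simp; omega)]

theorem S1_mul_M1_transpose_mulVec_subLast {b : ℕ} (y : Fin (b + 1) → ℤ) :
    (S1 b * (M1 b)ᵀ) *ᵥ subLast y = -subLast (fun i => y (i + 1)) := by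
  have h : (M1 b)ᵀ *ᵥ subLast y = M1 b *ᵥ -subLast (fun i => y (i + 1)) := by
    rw [mulVec_neg, M1_transpose_mulVec_subLast, M1_mulVec_subLast_rotate]
    ext k; simp
  rw [← mulVec_mulVec, h, mulVec_mulVec, S1_mul_M1, one_mulVec]

open Fin.NatCast in
theorem S1_mul_M1_transpose_pow_mulVec_subLast {b : ℕ} (y : Fin (b + 1) → ℤ) (k : ℕ) :
    (S1 b * (M1 b)ᵀ) ^ k *ᵥ subLast y =
      (-1 : ℤ) ^ k • subLast (fun i => y (i + (k : Fin (b + 1)))) := by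
  induction k with
  | zero => simp
  | succ k ih =>
    rw [pow_succ', ← mulVec_mulVec, ih, mulVec_smul, S1_mul_M1_transpose_mulVec_subLast, pow_succ,
      mul_neg_one, neg_smul, smul_neg, Nat.cast_succ]
    simp only [add_assoc, add_comm (1 : Fin (b + 1))]

open Fin.NatCast in
theorem S1_mul_M1_transpose_pow (b : ℕ) :
    (S1 b * (M1 b)ᵀ) ^ (b + 1) = (-1 : ℤ) ^ (b + 1) • 1 := by
  rw [ext_iff_mulVec]
  intro x
  have hx : x = subLast (Fin.snoc x 0) := by ext i; simp [subLast]
  rw [hx, S1_mul_M1_transpose_pow_mulVec_subLast, Fin.natCast_self, smul_mulVec, one_mulVec]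
  simp only [add_zero]

theorem Matrix.kronecker_pow {R m n : Type*} [CommSemiring R] [Fintype m] [Fintype n]
    [DecidableEq m] [DecidableEq n] (A : Matrix m m R) (B : Matrix n n R) (k : ℕ) :
    (A ⊗ₖ B) ^ k = (A ^ k) ⊗ₖ (B ^ k) := by
  induction k with
  | zero => simp
  | succ k ih => rw [pow_succ, ih, pow_succ, pow_succ, mul_kronecker_mul]

theorem IsUnit.pow_mul_swap_eq_smul_one {R A : Type*} [CommSemiring R] [Semiring A] [Algebra R A]
    {a b : A} (ha : IsUnit a) {k : ℕ} {c : R} (h : (a * b) ^ k = c • 1) : (b * a) ^ k = c • 1 := by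
  obtain ⟨u, rfl⟩ := ha
  have hconj : b * u = ↑u⁻¹ * (u * b) * u := by simp
  rw [hconj, Units.conj_pow', h, mul_smul_comm, smul_mul_assoc, mul_one, Units.inv_mul]

theorem Smat_succ (b N : ℕ) : Smat b (N + 1) = reindexAlgEquiv ℤ ℤ (pke b N) (S1 b ⊗ₖ Smat b N) :=
  rfl

theorem Mmat_succ (b N : ℕ) : Mmat b (N + 1) = reindexAlgEquiv ℤ ℤ (pke b N) (M1 b ⊗ₖ Mmat b N) :=
  rfl

theorem Mmat_succ_transpose (b N : ℕ) :
    (Mmat b (N + 1))ᵀ = reindexAlgEquiv ℤ ℤ (pke b N) ((M1 b)ᵀ ⊗ₖ (Mmat b N)ᵀ) := by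
  rw [Mmat_succ, coe_reindexAlgEquiv, transpose_reindex, kroneckerMap_transpose]

theorem Smat_mul_Mmat (b N : ℕ) : Smat b N * Mmat b N = 1 := by
  induction N with
  | zero => exact mul_one _
  | succ N ih =>
    rw [Smat_succ, Mmat_succ, ← map_mul, ← mul_kronecker_mul, S1_mul_M1, ih, one_kronecker_one,
      map_one]

theorem Smat_mul_Mmat_transpose_pow (b N : ℕ) :
    (Smat b N * (Mmat b N)ᵀ) ^ (b + 1) = (-1 : ℤ) ^ (N * (b + 1)) • 1 := by
  induction N with
  | zero =>
    rw [Smat, Mmat, transpose_one, mul_one, one_pow, Nat.zero_mul]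
    norm_num
  | succ N ih =>
    rw [Smat_succ, Mmat_succ_transpose, ← map_mul, ← mul_kronecker_mul, ← map_pow, kronecker_pow,
      S1_mul_M1_transpose_pow, ih, smul_kronecker, kronecker_smul, one_kronecker_one, smul_smul,
      map_smul, map_one, ← pow_add, add_one_mul N, add_comm (N * (b + 1))]

theorem UN_VN_pow_general (b N : ℕ) :
    (Smat b N * (Mmat b N)ᵀ) ^ (b + 1) = ((-1 : ℤ) ^ (N * (b + 1))) • 1 ∧
      ((Mmat b N)ᵀ * Smat b N) ^ (b + 1) = ((-1 : ℤ) ^ (N * (b + 1))) • 1 :=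
  ⟨Smat_mul_Mmat_transpose_pow b N,
    (IsUnit.of_mul_eq_one _ (Smat_mul_Mmat b N)).pow_mul_swap_eq_smul_one
      (Smat_mul_Mmat_transpose_pow b N)⟩

/-- With `T_N := M_Nᵀ`, `U_N := S_N T_N` and `V_N := T_N S_N`, one has
`U_N^{b+1} = V_N^{b+1} = (-1)^{N(b+1)} · I_{b^N}`. -/
theorem UN_VN_pow (b N : ℕ) (hb : 2 ≤ b) (hN : 1 ≤ N) :
    (Smat b N * (Mmat b N)ᵀ) ^ (b + 1) = ((-1 : ℤ) ^ (N * (b + 1))) • 1 ∧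
      ((Mmat b N)ᵀ * Smat b N) ^ (b + 1) = ((-1 : ℤ) ^ (N * (b + 1))) • 1 :=
  UN_VN_pow_general b N
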